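/- Suppose x, y in (0,1), and normalized confusion matrices for two groups satisfy predictive parity (TPa·FPb = TPb·FPa), treatment equality (FNa·FPb = FNb·FPa), and FPb > 0. Then FPa·(1-y) = FPb·(1-x) and FNa·(1-y) = FNb·(1-x). -/
import Mathlib

theorem stmt
    (x y TPa FNa TNa FPa TPb FNb TNb FPb : ℝ)
    (hx0 : 0 < x) (hx1 : x < 1) (hy0 : 0 < y) (hy1 : y < 1)
    (hTPa : 0 ≤ TPa) (hFNa : 0 ≤ FNa) (hTNa : 0 ≤ TNa) (hFPa : 0 ≤ FPa)
    (hTPb : 0 ≤ TPb) (hFNb : 0 ≤ FNb) (hTNb : 0 ≤ TNb) (hFPb : 0 ≤ FPb)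
    (hra : TPa + FNa = 1 - x) (hra' : TNa + FPa = x)
    (hrb : TPb + FNb = 1 - y) (hrb' : TNb + FPb = y)
    (hpp : TPa * FPb = TPb * FPa)
    (hte : FNa * FPb = FNb * FPa)
    (hFPbpos : 0 < FPb)
    : FPa * (1 - y) = FPb * (1 - x) ∧ FNa * (1 - y) = FNb * (1 - x) := by
  have h1 : (1 - x) * FPb = (1 - y) * FPa := by
    have : (TPa + FNa) * FPb = (TPb + FNb) * FPa := by ring_nf; nlinarith [hpp, hte]
    rw [hra, hrb] at this; exact this
  have hFPa : 0 < FPa := by nlinarith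
  constructor
  · linarith [h1]
  · have h2 : FNa * (1 - y) * FPb = FNb * (1 - x) * FPb := by nlinarith [hte, h1]
    exact mul_right_cancel₀ (ne_of_gt hFPbpos) h2
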